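/- Let x, y be a heavy pair (in particular an independent pair, both non-leaves of T, both ≠ s, with G \ {x} and G \ {y} connected). Then G \ {x,y} is connected if and only if at least one of the heavy children x_h, y_h is connected to the source s in G \ {x,y}. -/

import Mathlib

/-- A rooted spanning tree of the graph `G`, given by a root and a parent function:
the root is a fixed point of `parent`, every vertex reaches the root by iterating
`parent`, and every (parent, child) pair is an edge of `G`. -/
structure RSTree {V : Type*} (G : SimpleGraph V) where
  root : V
  parent : V → V
  parent_root : parent root = root
  reaches : ∀ v : V, ∃ n : ℕ, parent^[n] v = root
  adj : ∀ v : V, v ≠ root → G.Adj (parent v) v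

namespace RSTree

variable {V : Type*} {G : SimpleGraph V}

/-- `u` is an ancestor of `v` in `T`, i.e. `u` lies on the tree path `π(root, v)`;
includes `u = v`. -/
def Anc (T : RSTree G) (u v : V) : Prop := ∃ n : ℕ, T.parent^[n] v = u

/-- The vertex set `V(T_x)` of the subtree of `T` rooted at `x`. -/
def sub (T : RSTree G) (x : V) : Set V := {v | T.Anc x v}

/-- `c` is a child of `v` in `T`. -/
def IsChild (T : RSTree G) (c v : V) : Prop := T.parent c = v ∧ c ≠ v

/-- `V_x = V(T_x) \ {x}`. -/
def Vx (T : RSTree G) (x : V) : Set V := {v | T.Anc x v ∧ v ≠ x}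

end RSTree

/-- `v` and `w` are connected by a walk of `G` all of whose vertices lie in `S`
(i.e. they lie in the same connected component of the induced subgraph `G[S]`). -/
def ReachableWithin {V : Type*} (G : SimpleGraph V) (S : Set V) (v w : V) : Prop :=
  ∃ p : G.Walk v w, ∀ u ∈ p.support, u ∈ S

/-- `C` is (the vertex set of) a connected component of the induced subgraph `G[S]`. -/
def IsCompOf {V : Type*} (G : SimpleGraph V) (S : Set V) (C : Set V) : Prop :=
  ∃ v ∈ S, C = {w | ReachableWithin G S v w}

/-- The connected component of `v` in the induced subgraph `G[S]` (as a vertex set). -/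
def CompOfVert {V : Type*} (G : SimpleGraph V) (S : Set V) (v : V) : Set V :=
  {w | ReachableWithin G S v w}

/-- The vertex set of the path `π_x(s,C) = π(s, u_C) ∘ (u_C, v_C)` associated to a
component `C` (given the choice functions `uc, vc` of the edge `(u_C, v_C)`): it
consists of all ancestors of `u_C` together with `v_C`. -/
def CompPath {V : Type*} {G : SimpleGraph V} (T : RSTree G)
    (uc vc : Set V → V) (C : Set V) : Set V :=
  {w | T.Anc w (uc C)} ∪ {vc C}

/-- `C ∈ 𝒞_x` is pseudo-`y`-sensitive: the path `π_x(s,C)` contains a tree edge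
`(y, y')` from `y` to a child `y'` of `y` such that `x` does not lie on
`π_y(s, C_{y,y'})`. Here `ucx, vcx` are the edge choices for components of `G[V_x]`
and `ucy, vcy` those for components of `G[V_y]`. -/
def PseudoSens {V : Type*} {G : SimpleGraph V} (T : RSTree G)
    (ucx vcx ucy vcy : Set V → V) (x y : V) (C : Set V) : Prop :=
  ∃ y', T.IsChild y' y ∧ T.Anc y' (ucx C) ∧
    x ∉ CompPath T ucy vcy (CompOfVert G (T.Vx y) y')

/-- `C ∈ 𝒞_x` is fully-`y`-sensitive: `y` lies on `π_x(s,C)` (i.e. `C` is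
`y`-sensitive) and `C` is not pseudo-`y`-sensitive. -/
def FullySens {V : Type*} {G : SimpleGraph V} (T : RSTree G)
    (ucx vcx ucy vcy : Set V → V) (x y : V) (C : Set V) : Prop :=
  y ∈ CompPath T ucx vcx C ∧ ¬ PseudoSens T ucx vcx ucy vcy x y C

/-- `hch` is a valid designation of heavy children: for every non-leaf vertex `v`,
`hch v` is a child of `v` whose subtree has the maximum number of vertices among all
children of `v`. -/
def HchValid {V : Type*} {G : SimpleGraph V} (T : RSTree G) (hch : V → V) : Prop :=
  ∀ v : V, (∃ c, T.IsChild c v) →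
    T.IsChild (hch v) v ∧ ∀ c, T.IsChild c v → (T.sub c).ncard ≤ (T.sub (hch v)).ncard

/-- The family `uc, vc` of edge choices is valid: for every `x ≠ s` with `G \ {x}`
connected and every connected component `C` of `G[V_x]`, `(uc x C, vc x C)` is an edge
of `G` with `vc x C ∈ C` and `uc x C ∉ V(T_x)`. -/
def GoodChoice {V : Type*} (G : SimpleGraph V) (T : RSTree G)
    (uc vc : V → Set V → V) : Prop :=
  ∀ x : V, x ≠ T.root → (G.induce (({x} : Set V)ᶜ)).Connected →
    ∀ C, IsCompOf G (T.Vx x) C →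
      G.Adj (uc x C) (vc x C) ∧ vc x C ∈ C ∧ uc x C ∉ T.sub x

/-- `x, y` is a heavy pair: an independent pair, both non-leaves of `T`, both `≠ s`,
with `G \ {x}` and `G \ {y}` connected, such that every fully-`y`-sensitive component
`C ∈ FS(x,y)` has the tree edge `(y, y_h)` on `π_x(s,C)` and every fully-`x`-sensitive
component `C ∈ FS(y,x)` has the tree edge `(x, x_h)` on `π_y(s,C)`. -/
def HeavyPair {V : Type*} {G : SimpleGraph V} (T : RSTree G) (hch : V → V)
    (uc vc : V → Set V → V) (x y : V) : Prop :=
  x ≠ T.root ∧ y ≠ T.root ∧ ¬ T.Anc x y ∧ ¬ T.Anc y x ∧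
  T.IsChild (hch x) x ∧ T.IsChild (hch y) y ∧
  (G.induce (({x} : Set V)ᶜ)).Connected ∧ (G.induce (({y} : Set V)ᶜ)).Connected ∧
  (∀ C, IsCompOf G (T.Vx x) C → FullySens T (uc x) (vc x) (uc y) (vc y) x y C →
    T.Anc (hch y) (uc x C)) ∧
  (∀ C, IsCompOf G (T.Vx y) C → FullySens T (uc y) (vc y) (uc x) (vc x) y x C →
    T.Anc (hch x) (uc y C))

/-!
A vertex `v ∈ V_x` leaves its component `C` of `G[V_x]` through the edge `(u_C, v_C)`.
If `y` is not an ancestor of `u_C`, the tree path from `u_C` to `s` avoids `x` and `y`.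
If `C` is pseudo-`y`-sensitive through the child `y'`, then `u_C` climbs inside `T_{y'}`
to `y'`, and the component of `y'` in `G[V_y]` exits at a vertex whose tree path to `s`
avoids `x` (by the choice of `y'`) and `y`. Otherwise `C` is fully-`y`-sensitive, and the
heavy-pair condition lets `u_C` climb inside `T_{y_h}` to `y_h`. So in `G \ {x,y}` every
vertex of `V_x` reaches `s` or `y_h`, every vertex of `V_y` reaches `s` or `x_h`, and the
remaining vertices reach `s` along the tree. If one heavy child reaches `s`, so does the
other, and then all of `G \ {x,y}` is connected to `s`.
-/

open SimpleGraph

section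

variable {V : Type*} {G : SimpleGraph V}

namespace RSTree

variable (T : RSTree G)

lemma anc_refl (v : V) : T.Anc v v := ⟨0, rfl⟩

lemma anc_trans {a b c : V} (hab : T.Anc a b) (hbc : T.Anc b c) : T.Anc a c := by
  obtain ⟨m, rfl⟩ := hab
  obtain ⟨n, rfl⟩ := hbc
  exact ⟨m + n, Function.iterate_add_apply _ _ _ _⟩

lemma eq_root_of_iterate_succ_eq {v : V} {n : ℕ} (hv : T.parent^[n + 1] v = v) :
    v = T.root := by
  obtain ⟨N, hN⟩ := T.reaches v
  have hper : Function.IsPeriodicPt T.parent (n + 1) v := hv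
  calc v = T.parent^[n * N + N] v := by rw [← add_one_mul]; exact (hper.mul_const N).eq.symm
    _ = T.root := by rw [Function.iterate_add_apply, hN, Function.iterate_fixed T.parent_root]

variable {T}

lemma IsChild.anc {c v : V} (h : T.IsChild c v) : T.Anc v c := ⟨1, h.1⟩

lemma IsChild.not_anc {c v : V} (h : T.IsChild c v) : ¬ T.Anc c v := by
  rintro ⟨m, hm⟩
  have hv : v = T.root := T.eq_root_of_iterate_succ_eq <| by
    rw [Function.iterate_succ_apply', hm, h.1]
  rw [hv, Function.iterate_fixed T.parent_root] at hm
  exact h.2 (hm.symm.trans hv.symm)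

lemma IsChild.mem_Vx {c v : V} (h : T.IsChild c v) : c ∈ T.Vx v := ⟨h.anc, h.2⟩

lemma IsChild.sub_subset_Vx {c v : V} (h : T.IsChild c v) : T.sub c ⊆ T.Vx v :=
  fun _ hz => ⟨T.anc_trans h.anc hz, by rintro rfl; exact h.not_anc hz⟩

lemma Vx_subset_compl_pair {x y : V} (hxy : ¬ T.Anc x y) : T.Vx x ⊆ ({x, y} : Set V)ᶜ := by
  rintro z ⟨hz, hzx⟩ (rfl | rfl : z = x ∨ z = y)
  exacts [hzx rfl, hxy hz]

lemma mem_compl_pair_of_notMem_sub {x y z : V} (hx : z ∉ T.sub x) (hy : z ∉ T.sub y) :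
    z ∈ ({x, y} : Set V)ᶜ := by
  rintro (rfl | rfl : z = x ∨ z = y)
  exacts [hx (T.anc_refl z), hy (T.anc_refl z)]

end RSTree

namespace ReachableWithin

variable {S : Set V} {u v w : V}

lemma refl (hv : v ∈ S) : ReachableWithin G S v v := ⟨.nil, by simpa using hv⟩

lemma symm (h : ReachableWithin G S v w) : ReachableWithin G S w v := by
  obtain ⟨p, hp⟩ := h
  exact ⟨p.reverse, fun u hu => hp u (by simpa using hu)⟩

lemma trans (huv : ReachableWithin G S u v) (hvw : ReachableWithin G S v w) :
    ReachableWithin G S u w := by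
  obtain ⟨p, hp⟩ := huv
  obtain ⟨q, hq⟩ := hvw
  exact ⟨p.append q, fun z hz => (Walk.mem_support_append_iff p q).1 hz |>.elim (hp z) (hq z)⟩

lemma mono {S' : Set V} (hS : S ⊆ S') (h : ReachableWithin G S v w) :
    ReachableWithin G S' v w := by
  obtain ⟨p, hp⟩ := h
  exact ⟨p, fun z hz => hS (hp z hz)⟩

lemma of_adj (h : G.Adj v w) (hv : v ∈ S) (hw : w ∈ S) : ReachableWithin G S v w :=
  ⟨.cons h .nil, by simp [hv, hw]⟩

lemma mem_right (h : ReachableWithin G S v w) : w ∈ S := by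
  obtain ⟨p, hp⟩ := h
  exact hp w p.end_mem_support

end ReachableWithin

lemma reachableWithin_iff_reachable_induce {S : Set V} {a b : S} :
    ReachableWithin G S a b ↔ (G.induce S).Reachable a b := by
  constructor
  · rintro ⟨p, hp⟩
    exact ⟨p.induce S hp⟩
  · rintro ⟨q⟩
    refine ⟨q.map (Embedding.induce S).toHom, fun u hu => ?_⟩
    obtain ⟨u', -, rfl⟩ := List.mem_map.1 (Walk.support_map _ q ▸ hu)
    exact u'.2

lemma induce_connected_iff_forall_reachableWithin {S : Set V} {r : V} (hr : r ∈ S) :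
    (G.induce S).Connected ↔ ∀ v ∈ S, ReachableWithin G S v r := by
  refine ⟨fun h v hv => reachableWithin_iff_reachable_induce.2 (h.preconnected ⟨v, hv⟩ ⟨r, hr⟩),
    fun h => (connected_iff_exists_forall_reachable _).2 ⟨⟨r, hr⟩, fun v => ?_⟩⟩
  exact reachableWithin_iff_reachable_induce.1 (h v v.2).symm

namespace RSTree

variable {T : RSTree G} {S : Set V}

lemma reachableWithin_parent {v : V} (hv : v ∈ S) (hp : T.parent v ∈ S) :
    ReachableWithin G S v (T.parent v) := by
  by_cases hroot : v = T.root
  · rw [hroot, T.parent_root]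
    exact .refl (hroot ▸ hv)
  · exact .of_adj (T.adj v hroot).symm hv hp

lemma reachableWithin_iterate_parent {v : V} (n : ℕ) (hS : ∀ k ≤ n, T.parent^[k] v ∈ S) :
    ReachableWithin G S v (T.parent^[n] v) := by
  induction n with
  | zero => exact .refl (hS 0 le_rfl)
  | succ n ih =>
    rw [Function.iterate_succ_apply']
    exact (ih fun k hk => hS k (by omega)).trans <| reachableWithin_parent (hS n (by omega))
      (by simpa only [Function.iterate_succ_apply'] using hS (n + 1) le_rfl)

lemma reachableWithin_of_anc {a v : V} (ha : T.Anc a v) (hS : T.sub a ⊆ S) :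
    ReachableWithin G S v a := by
  obtain ⟨n, rfl⟩ := ha
  refine reachableWithin_iterate_parent n fun k hk => hS ⟨n - k, ?_⟩
  rw [← Function.iterate_add_apply, Nat.sub_add_cancel hk]

lemma reachableWithin_root_of_notMem_sub {x y z : V} (hx : z ∉ T.sub x) (hy : z ∉ T.sub y) :
    ReachableWithin G ({x, y} : Set V)ᶜ z T.root := by
  obtain ⟨N, hN⟩ := T.reaches z
  rw [← hN]
  refine reachableWithin_iterate_parent N fun k _ => mem_compl_pair_of_notMem_sub (T := T) ?_ ?_
  exacts [fun ⟨m, hm⟩ => hx ⟨m + k, by rwa [Function.iterate_add_apply]⟩,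
    fun ⟨m, hm⟩ => hy ⟨m + k, by rwa [Function.iterate_add_apply]⟩]

lemma reachableWithin_root_of_mem_compl_pair {x y v : V}
    (hx : ∀ w ∈ T.Vx x, ReachableWithin G ({x, y} : Set V)ᶜ w T.root)
    (hy : ∀ w ∈ T.Vx y, ReachableWithin G ({x, y} : Set V)ᶜ w T.root)
    (hv : v ∈ ({x, y} : Set V)ᶜ) : ReachableWithin G ({x, y} : Set V)ᶜ v T.root := by
  by_cases hsx : v ∈ T.sub x
  · exact hx v ⟨hsx, fun h => hv (.inl h)⟩
  by_cases hsy : v ∈ T.sub y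
  · exact hy v ⟨hsy, fun h => hv (.inr h)⟩
  exact reachableWithin_root_of_notMem_sub hsx hsy

end RSTree

namespace GoodChoice

variable {T : RSTree G} {uc vc : V → Set V → V} {x v : V}

lemma uc_notMem_sub (h : GoodChoice G T uc vc) (hx : x ≠ T.root)
    (hconx : (G.induce ({x} : Set V)ᶜ).Connected) (hv : v ∈ T.Vx x) :
    uc x (CompOfVert G (T.Vx x) v) ∉ T.sub x :=
  (h x hx hconx _ ⟨v, hv, rfl⟩).2.2

lemma reachableWithin_uc (h : GoodChoice G T uc vc) (hx : x ≠ T.root)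
    (hconx : (G.induce ({x} : Set V)ᶜ).Connected) (hv : v ∈ T.Vx x) {S : Set V}
    (hS : T.Vx x ⊆ S) (hu : uc x (CompOfVert G (T.Vx x) v) ∈ S) :
    ReachableWithin G S v (uc x (CompOfVert G (T.Vx x) v)) := by
  obtain ⟨hadj, hvc, -⟩ := h x hx hconx _ ⟨v, hv, rfl⟩
  have hvc : ReachableWithin G (T.Vx x) v (vc x (CompOfVert G (T.Vx x) v)) := hvc
  exact (hvc.mono hS).trans (.of_adj hadj.symm (hS hvc.mem_right) hu)

end GoodChoice

open RSTree in
lemma reachableWithin_root_or_child_of_mem_Vx {T : RSTree G} {uc vc : V → Set V → V}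
    (hgood : GoodChoice G T uc vc) {x y yh : V} (hx : x ≠ T.root) (hy : y ≠ T.root)
    (hxy : ¬ T.Anc x y) (hyx : ¬ T.Anc y x) (hyh : T.IsChild yh y)
    (hconx : (G.induce ({x} : Set V)ᶜ).Connected) (hcony : (G.induce ({y} : Set V)ᶜ).Connected)
    (hFS : ∀ C, IsCompOf G (T.Vx x) C → FullySens T (uc x) (vc x) (uc y) (vc y) x y C →
      T.Anc yh (uc x C))
    {v : V} (hv : v ∈ T.Vx x) :
    ReachableWithin G ({x, y} : Set V)ᶜ v T.root ∨ ReachableWithin G ({x, y} : Set V)ᶜ v yh := by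
  have hVx : T.Vx x ⊆ ({x, y} : Set V)ᶜ := Vx_subset_compl_pair hxy
  have hVy : T.Vx y ⊆ ({x, y} : Set V)ᶜ := Set.pair_comm y x ▸ Vx_subset_compl_pair hyx
  set C := CompOfVert G (T.Vx x) v
  have hCx : uc x C ∉ T.sub x := hgood.uc_notMem_sub hx hconx hv
  by_cases hCy : T.Anc y (uc x C)
  · by_cases hps : PseudoSens T (uc x) (vc x) (uc y) (vc y) x y C
    · obtain ⟨y', hy', hy'C, hxD⟩ := hps
      set D := CompOfVert G (T.Vx y) y'
      have hDx : uc y D ∉ T.sub x := fun h => hxD (.inl h)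
      have hDy : uc y D ∉ T.sub y := hgood.uc_notMem_sub hy hcony hy'.mem_Vx
      refine .inl <| (hgood.reachableWithin_uc hx hconx hv hVx (hVy (hy'.sub_subset_Vx hy'C))).trans
        <| (reachableWithin_of_anc hy'C (hy'.sub_subset_Vx.trans hVy)).trans
        <| (hgood.reachableWithin_uc hy hcony hy'.mem_Vx hVy
          (mem_compl_pair_of_notMem_sub hDx hDy)).trans
        <| reachableWithin_root_of_notMem_sub hDx hDy
    · have hyhC : T.Anc yh (uc x C) := hFS C ⟨v, hv, rfl⟩ ⟨.inl hCy, hps⟩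
      exact .inr <| (hgood.reachableWithin_uc hx hconx hv hVx (hVy (hyh.sub_subset_Vx hyhC))).trans
        (reachableWithin_of_anc hyhC (hyh.sub_subset_Vx.trans hVy))
  · exact .inl <| (hgood.reachableWithin_uc hx hconx hv hVx
      (mem_compl_pair_of_notMem_sub hCx hCy)).trans (reachableWithin_root_of_notMem_sub hCx hCy)

end

theorem stmt10_general {V : Type*} (G : SimpleGraph V)
    (T : RSTree G) (hch : V → V)
    (uc vc : V → Set V → V) (hgood : GoodChoice G T uc vc)
    (x y : V) (hxy : HeavyPair T hch uc vc x y) :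
    (G.induce (({x, y} : Set V)ᶜ)).Connected ↔
      (ReachableWithin G (({x, y} : Set V)ᶜ) (hch x) T.root ∨
       ReachableWithin G (({x, y} : Set V)ᶜ) (hch y) T.root) := by
  obtain ⟨hx, hy, hxy, hyx, hxh, hyh, hconx, hcony, hFSx, hFSy⟩ := hxy
  have hroot : T.root ∈ ({x, y} : Set V)ᶜ := by
    rintro (h | h : T.root = x ∨ T.root = y)
    exacts [hx h.symm, hy h.symm]
  have hreach_x (v) (hv : v ∈ T.Vx x) := reachableWithin_root_or_child_of_mem_Vx hgood
    hx hy hxy hyx hyh hconx hcony hFSx hv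
  have hreach_y (v) (hv : v ∈ T.Vx y) : ReachableWithin G ({x, y} : Set V)ᶜ v T.root ∨
      ReachableWithin G ({x, y} : Set V)ᶜ v (hch x) := by
    simpa only [Set.pair_comm y x] using reachableWithin_root_or_child_of_mem_Vx hgood
      hy hx hyx hxy hxh hcony hconx hFSy hv
  rw [induce_connected_iff_forall_reachableWithin hroot]
  refine ⟨fun h => .inl (h _ (RSTree.Vx_subset_compl_pair hxy hxh.mem_Vx)), fun h => ?_⟩
  obtain ⟨hxh_root, hyh_root⟩ : ReachableWithin G ({x, y} : Set V)ᶜ (hch x) T.root ∧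
      ReachableWithin G ({x, y} : Set V)ᶜ (hch y) T.root := by
    rcases h with h | h
    · exact ⟨h, (hreach_y _ hyh.mem_Vx).elim id (·.trans h)⟩
    · exact ⟨(hreach_x _ hxh.mem_Vx).elim id (·.trans h), h⟩
  exact fun v => RSTree.reachableWithin_root_of_mem_compl_pair
    (fun w hw => (hreach_x w hw).elim id (·.trans hyh_root))
    (fun w hw => (hreach_y w hw).elim id (·.trans hxh_root))

/-- Let `x, y` be a heavy pair (in particular an independent pair,
both non-leaves of `T`, both `≠ s`, with `G \ {x}` and `G \ {y}` connected). Then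
`G \ {x,y}` is connected if and only if at least one of the heavy children
`x_h, y_h` is connected to the source `s` in `G \ {x,y}`. -/
theorem stmt10 {V : Type*} [Fintype V] (G : SimpleGraph V) (hG : G.Connected)
    (T : RSTree G) (hch : V → V) (hhch : HchValid T hch)
    (uc vc : V → Set V → V) (hgood : GoodChoice G T uc vc)
    (x y : V) (hxy : HeavyPair T hch uc vc x y) :
    (G.induce (({x, y} : Set V)ᶜ)).Connected ↔
      (ReachableWithin G (({x, y} : Set V)ᶜ) (hch x) T.root ∨
       ReachableWithin G (({x, y} : Set V)ᶜ) (hch y) T.root) :=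
  stmt10_general G T hch uc vc hgood x y hxy
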